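/- Fix M ∈ ℕ and α ∈ ℕ with 0 ≤ α < M. Define II_α(x) := 2^M ∫_{I_M} 2^α |K_{2^α}(x+t)| dμ(t). Then ∫_{G \ I_M} |II_α(x)|^{1/2} dμ(x) ≤ C for an absolute constant C independent of M and α. -/

import Mathlib

open MeasureTheory Finset

noncomputable section

/-- The dyadic group: countable product of `ZMod 2`. -/
abbrev G := ℕ → ZMod 2

instance : MeasurableSpace (ZMod 2) := ⊤

/-- Walsh–Paley function `w n`. -/
def walsh (n : ℕ) (x : G) : ℝ :=
  ∏ k ∈ Finset.range (n + 1), if n.testBit k then (-1 : ℝ) ^ (x k).val else 1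

/-- Walsh–Dirichlet kernel `D n = ∑_{k<n} w k`. -/
def Dker (n : ℕ) (x : G) : ℝ := ∑ k ∈ Finset.range n, walsh k x

/-- Walsh–Fejér kernel `K n = (1/n) ∑_{k=1}^n D k`. -/
def Kker (n : ℕ) (x : G) : ℝ := (1 / (n : ℝ)) * ∑ k ∈ Finset.range n, Dker (k + 1) x

/-- Dyadic cylinder `I_n(y)`: points agreeing with `y` in the first `n` coordinates. -/
def cyl (n : ℕ) (y : G) : Set G := {x | ∀ j < n, x j = y j}

/-- `I_n = I_n(0)`. -/
def Iset (n : ℕ) : Set G := cyl n 0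

/-- The generator `e t`, with a single `1` in coordinate `t`. -/
def e (t : ℕ) : G := fun j => if j = t then 1 else 0


/-- walsh as a product over any sufficiently long range. -/
lemma walsh_eq_prod (n : ℕ) (x : G) {N : ℕ} (hN : n + 1 ≤ N) :
    walsh n x = ∏ k ∈ Finset.range N, if n.testBit k then (-1 : ℝ) ^ (x k).val else 1 := by
  rw [walsh]
  apply Finset.prod_subset (Finset.range_subset_range.2 hN)
  intro k _ hk
  simp only [Finset.mem_range, not_lt] at hk
  have hnk : n < k := by omega
  have : n.testBit k = false := Nat.testBit_lt_two_pow (lt_of_lt_of_le (Nat.lt_two_pow_self (n := n))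
    (Nat.pow_le_pow_right (by norm_num) hnk.le))
  simp [this]

lemma abs_walsh (n : ℕ) (x : G) : |walsh n x| = 1 := by
  rw [walsh, Finset.abs_prod]
  apply Finset.prod_eq_one
  intro k _
  split
  · rw [abs_pow, abs_neg, abs_one, one_pow]
  · exact abs_one

lemma testBit_two_pow_add {m k : ℕ} (hk : k < 2 ^ m) (j : ℕ) :
    (2 ^ m + k).testBit j = ((2 ^ m : ℕ).testBit j || k.testBit j) := by
  have h1 : (2:ℕ) ^ m + k = 2 ^ m * 1 + k := by ring
  rw [h1, Nat.testBit_two_pow_mul_add 1 hk j]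
  rcases lt_trichotomy j m with h | h | h
  · simp [h, Nat.testBit_two_pow_of_ne (by omega : m ≠ j)]
  · subst h
    simp [Nat.testBit_two_pow_self, Nat.testBit_lt_two_pow hk]
  · have : k.testBit j = false := Nat.testBit_lt_two_pow
      (lt_of_lt_of_le hk (Nat.pow_le_pow_right (by norm_num) h.le))
    have h1 : Nat.testBit 1 (j - m) = false := Nat.testBit_lt_two_pow (Nat.one_lt_two_pow (by omega))
    simp [this, h1, Nat.testBit_two_pow_of_ne (by omega : m ≠ j), if_neg (by omega : ¬ j < m)]

lemma walsh_two_pow_add {m k : ℕ} (hk : k < 2 ^ m) (x : G) :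
    walsh (2 ^ m + k) x = walsh (2 ^ m) x * walsh k x := by
  rw [walsh_eq_prod (2 ^ m + k) x (le_refl _),
      walsh_eq_prod (2 ^ m) x (N := 2 ^ m + k + 1) (by omega),
      walsh_eq_prod k x (N := 2 ^ m + k + 1) (by omega), ← Finset.prod_mul_distrib]
  apply Finset.prod_congr rfl
  intro j _
  rw [testBit_two_pow_add hk j]
  have hboth : ¬((2 ^ m : ℕ).testBit j = true ∧ k.testBit j = true) := by
    rintro ⟨h3, h4⟩
    have hj : m = j := by
      by_contra hne
      rw [Nat.testBit_two_pow_of_ne hne] at h3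
      exact Bool.false_ne_true h3
    subst hj
    rw [Nat.testBit_lt_two_pow hk] at h4
    exact Bool.false_ne_true h4
  rcases h3 : (2 ^ m : ℕ).testBit j <;> rcases h4 : k.testBit j <;>
    simp_all

example : True := trivial

lemma walsh_zero (x : G) : walsh 0 x = 1 := by
  simp [walsh]

lemma walsh_two_pow (m : ℕ) (x : G) : walsh (2 ^ m) x = (-1 : ℝ) ^ (x m).val := by
  rw [walsh]
  rw [Finset.prod_eq_single m]
  · simp [Nat.testBit_two_pow_self]
  · intro b _ hb
    simp [Nat.testBit_two_pow_of_ne (Ne.symm hb)]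
  · intro hm
    exfalso
    exact hm (Finset.mem_range.2 (by have := Nat.lt_two_pow_self (n := m); omega))

lemma walsh_two_pow_of_zero {m : ℕ} {x : G} (h : x m = 0) : walsh (2 ^ m) x = 1 := by
  rw [walsh_two_pow, h]
  simp

lemma zmod2_eq_one {a : ZMod 2} (h : a ≠ 0) : a = 1 := by
  revert h; revert a; decide

lemma walsh_two_pow_of_ne {m : ℕ} {x : G} (h : x m ≠ 0) : walsh (2 ^ m) x = -1 := by
  rw [walsh_two_pow, zmod2_eq_one h]
  norm_num [ZMod.val_one]

lemma Dker_two_pow_succ (m : ℕ) (x : G) :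
    Dker (2 ^ (m + 1)) x = (1 + walsh (2 ^ m) x) * Dker (2 ^ m) x := by
  have h : (2:ℕ) ^ (m + 1) = 2 ^ m + 2 ^ m := by ring
  rw [Dker, h, Finset.sum_range_add]
  have : ∀ k ∈ Finset.range (2 ^ m), walsh (2 ^ m + k) x = walsh (2 ^ m) x * walsh k x := by
    intro k hk
    exact walsh_two_pow_add (Finset.mem_range.1 hk) x
  rw [Finset.sum_congr rfl this, ← Finset.mul_sum]
  rw [Dker]
  ring

lemma Dker_two_pow (m : ℕ) (x : G) :
    Dker (2 ^ m) x = if ∀ j < m, x j = 0 then (2 : ℝ) ^ m else 0 := by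
  induction m with
  | zero => simp [Dker, walsh_zero]
  | succ m ih =>
    rw [Dker_two_pow_succ, ih]
    by_cases h : ∀ j < m + 1, x j = 0
    · rw [if_pos h, if_pos (fun j hj => h j (by omega)),
        walsh_two_pow_of_zero (h m (by omega))]
      ring
    · rw [if_neg h]
      push_neg at h
      obtain ⟨j, hj, hxj⟩ := h
      by_cases hjm : j < m
      · rw [if_neg (by push_neg; exact ⟨j, hjm, hxj⟩)]
        ring
      · have hjm' : j = m := by omega
        subst hjm'
        rw [walsh_two_pow_of_ne hxj]
        ring

/-- partial sums of Dirichlet kernels up to `2^α`. -/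
def Ssum (α : ℕ) (x : G) : ℝ := ∑ k ∈ Finset.range (2 ^ α), Dker (k + 1) x

lemma Dker_two_pow_add {m k : ℕ} (hk : k ≤ 2 ^ m) (x : G) :
    Dker (2 ^ m + k) x = Dker (2 ^ m) x + walsh (2 ^ m) x * Dker k x := by
  rw [Dker, Finset.sum_range_add]
  have : ∀ i ∈ Finset.range k, walsh (2 ^ m + i) x = walsh (2 ^ m) x * walsh i x := by
    intro i hi
    exact walsh_two_pow_add (by have := Finset.mem_range.1 hi; omega) x
  rw [Finset.sum_congr rfl this, ← Finset.mul_sum]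
  rfl

lemma Ssum_succ (α : ℕ) (x : G) :
    Ssum (α + 1) x = (1 + walsh (2 ^ α) x) * Ssum α x + 2 ^ α * Dker (2 ^ α) x := by
  have h : (2:ℕ) ^ (α + 1) = 2 ^ α + 2 ^ α := by ring
  rw [Ssum, h, Finset.sum_range_add]
  have : ∀ k ∈ Finset.range (2 ^ α), Dker (2 ^ α + k + 1) x
      = Dker (2 ^ α) x + walsh (2 ^ α) x * Dker (k + 1) x := by
    intro k hk
    rw [add_assoc]
    exact Dker_two_pow_add (by have := Finset.mem_range.1 hk; omega) x
  rw [Finset.sum_congr rfl this, Finset.sum_add_distrib, ← Finset.mul_sum,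
    Finset.sum_const, Finset.card_range]
  rw [Ssum]
  ring

lemma abs_Dker_le (n : ℕ) (x : G) : |Dker n x| ≤ n := by
  rw [Dker]
  calc |∑ k ∈ Finset.range n, walsh k x| ≤ ∑ k ∈ Finset.range n, |walsh k x| :=
        Finset.abs_sum_le_sum_abs _ _
    _ = ∑ k ∈ Finset.range n, (1:ℝ) := by
        exact Finset.sum_congr rfl fun k _ => abs_walsh k x
    _ = n := by simp

lemma abs_Ssum_le (α : ℕ) (x : G) : |Ssum α x| ≤ 4 ^ α := by
  rw [Ssum]
  calc |∑ k ∈ Finset.range (2 ^ α), Dker (k + 1) x|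
      ≤ ∑ k ∈ Finset.range (2 ^ α), |Dker (k + 1) x| := Finset.abs_sum_le_sum_abs _ _
    _ ≤ ∑ k ∈ Finset.range (2 ^ α), ((2:ℝ) ^ α) := by
        apply Finset.sum_le_sum
        intro k hk
        refine le_trans (abs_Dker_le (k + 1) x) ?_
        have hk' := Finset.mem_range.1 hk
        have : (k + 1 : ℝ) ≤ (2:ℝ) ^ α := by
          have : (k + 1 : ℕ) ≤ 2 ^ α := by omega
          exact_mod_cast this
        exact_mod_cast this
    _ = (2:ℝ) ^ α * 2 ^ α := by simp [Finset.sum_const, Finset.card_range, mul_comm]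
    _ = 4 ^ α := by rw [← mul_pow]; norm_num

lemma Ssum_of_max {α m : ℕ} {x : G} (hm : m < α) (hxm : x m ≠ 0)
    (hmax : ∀ j, m < j → j < α → x j = 0) :
    Ssum α x = 2 ^ (α - 1 - m) * (2 ^ m * Dker (2 ^ m) x) := by
  induction α with
  | zero => omega
  | succ α ih =>
    by_cases hma : m = α
    · subst hma
      rw [Ssum_succ, walsh_two_pow_of_ne hxm]
      simp
    · have hm' : m < α := by omega
      rw [Ssum_succ, ih hm' (fun j h1 h2 => hmax j h1 (by omega)),
        walsh_two_pow_of_zero (hmax α (by omega) (by omega)),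
        Dker_two_pow α x, if_neg (by push_neg; exact ⟨m, hm', hxm⟩)]
      have : α + 1 - 1 - m = (α - 1 - m) + 1 := by omega
      rw [this]
      ring

lemma Ssum_eq_Kker (α : ℕ) (x : G) : (2:ℝ) ^ α * |Kker (2 ^ α) x| = |Ssum α x| := by
  rw [Kker, Ssum, abs_mul]
  push_cast
  rw [abs_of_nonneg (by positivity : (0:ℝ) ≤ 1 / (2:ℝ)^α)]
  rw [← mul_assoc, mul_one_div, div_self (by positivity : ((2:ℝ)^α) ≠ 0), one_mul]

lemma walsh_local {n α : ℕ} (hn : n < 2 ^ α) {x y : G} (h : ∀ j < α, x j = y j) :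
    walsh n x = walsh n y := by
  rw [walsh, walsh]
  apply Finset.prod_congr rfl
  intro k _
  by_cases hb : n.testBit k
  · have hk : k < α := by
      by_contra hk
      push_neg at hk
      rw [Nat.testBit_lt_two_pow (lt_of_lt_of_le hn (Nat.pow_le_pow_right (by norm_num) hk))] at hb
      exact Bool.false_ne_true hb
    rw [h k hk]
  · simp [hb]

lemma Kker_local {α : ℕ} {x y : G} (h : ∀ j < α, x j = y j) :
    Kker (2 ^ α) x = Kker (2 ^ α) y := by
  rw [Kker, Kker]
  congr 1
  apply Finset.sum_congr rfl
  intro k hk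
  rw [Dker, Dker]
  apply Finset.sum_congr rfl
  intro i hi
  have hik := Finset.mem_range.1 hi
  have hkk := Finset.mem_range.1 hk
  exact walsh_local (by omega) h

lemma measurable_cyl (n : ℕ) (y : G) : MeasurableSet (cyl n y) := by
  have : cyl n y = ⋂ j ∈ Set.Iio n, {x : G | x j = y j} := by
    ext x; simp [cyl]
  rw [this]
  apply MeasurableSet.biInter (Set.to_countable _)
  intro j _
  haveI : MeasurableSingletonClass (ZMod 2) := ⟨fun _ => trivial⟩
  exact measurableSet_eq_fun (measurable_pi_apply j) measurable_const

lemma measurable_walsh (n : ℕ) : Measurable (walsh n) := by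
  apply Finset.measurable_prod
  intro k _
  by_cases hb : n.testBit k
  · simp only [hb, if_true]
    exact (measurable_from_top (f := fun a : ZMod 2 => ((-1:ℝ) ^ a.val))).comp
      (measurable_pi_apply k)
  · simp only [hb, if_false]
    exact measurable_const

lemma measurable_Kker (n : ℕ) : Measurable (Kker n) := by
  apply Measurable.const_mul
  apply Finset.measurable_sum
  intro k _
  apply Finset.measurable_sum
  intro i _
  exact measurable_walsh i

lemma sqrt_two_pow (n : ℕ) : Real.sqrt ((2:ℝ) ^ n) = Real.sqrt 2 ^ n := by
  have h : ((Real.sqrt 2) ^ n) ^ 2 = (2:ℝ) ^ n := by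
    rw [← pow_mul, mul_comm, pow_mul, Real.sq_sqrt (by norm_num : (0:ℝ) ≤ 2)]
  rw [← h, Real.sqrt_sq (by positivity)]

lemma geom_bound (n : ℕ) {q : ℝ} (h0 : 0 ≤ q) (h1 : q < 1) :
    ∑ j ∈ Finset.range n, q ^ j ≤ (1 - q)⁻¹ := by
  have := (summable_geometric_of_lt_one h0 h1).sum_le_tsum (Finset.range n) (fun i _ => pow_nonneg h0 i)
  rwa [tsum_geometric_of_lt_one h0 h1] at this

lemma numeric_bound (α : ℕ) :
    ∑ s ∈ Finset.range (α + 1), ((2:ℝ)⁻¹ ^ α * Real.sqrt ((2:ℝ) ^ (α + s))) ≤ 4 := by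
  set r := Real.sqrt 2 with hrdef
  have hr0 : 0 < r := Real.sqrt_pos.mpr (by norm_num)
  have hr2 : r ^ 2 = 2 := Real.sq_sqrt (by norm_num)
  have hr1 : 1 < r := by nlinarith
  have hterm : ∀ s ∈ Finset.range (α + 1),
      (2:ℝ)⁻¹ ^ α * Real.sqrt ((2:ℝ) ^ (α + s)) = (r⁻¹) ^ (α - s) := by
    intro s hs
    have hsα : s ≤ α := by have := Finset.mem_range.1 hs; omega
    rw [sqrt_two_pow]
    calc (2:ℝ)⁻¹ ^ α * r ^ (α + s)
        = ((r ^ 2)⁻¹) ^ α * r ^ (α + s) := by rw [hr2]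
      _ = (r⁻¹) ^ (2 * α) * r ^ (α + s) := by rw [← inv_pow, ← pow_mul]
      _ = (r⁻¹) ^ (α - s) * ((r⁻¹) ^ (α + s) * r ^ (α + s)) := by
          rw [show 2 * α = (α - s) + (α + s) by omega, pow_add, mul_assoc]
      _ = (r⁻¹) ^ (α - s) := by
          rw [inv_pow r (α + s), inv_mul_cancel₀ (pow_ne_zero _ hr0.ne'), mul_one]
  rw [Finset.sum_congr rfl hterm]
  rw [← Finset.sum_range_reflect (fun s => (r⁻¹) ^ (α - s)) (α + 1)]
  have hre : ∀ j ∈ Finset.range (α + 1), (r⁻¹) ^ (α - (α + 1 - 1 - j)) = (r⁻¹) ^ j := by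
    intro j hj
    have := Finset.mem_range.1 hj
    congr 1
    omega
  rw [Finset.sum_congr rfl hre]
  have hq0 : (0:ℝ) ≤ r⁻¹ := by positivity
  have hq1 : r⁻¹ < 1 := by
    rw [inv_lt_one_iff₀]
    right; exact hr1
  refine le_trans (geom_bound (α + 1) hq0 hq1) ?_
  have h43 : r⁻¹ ≤ 3/4 := by
    rw [inv_eq_one_div, div_le_iff₀ hr0]
    nlinarith
  have h14 : (1:ℝ)/4 ≤ 1 - r⁻¹ := by linarith
  calc (1 - r⁻¹)⁻¹ ≤ ((1:ℝ)/4)⁻¹ := by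
        apply inv_anti₀ (by norm_num) h14
    _ = 4 := by norm_num

/-- uniform bound for `∫_{G∖I_M} |II_α|^{1/2}`. -/
theorem sqrt_integral_bound_K :
    ∃ C : ℝ, 0 < C ∧
      ∀ (μ : Measure G), (∀ (m : ℕ) (y : G), μ (cyl m y) = (2 : ENNReal)⁻¹ ^ m) →
        ∀ (M α : ℕ), α < M →
          ∫ x in (Iset M)ᶜ,
              Real.sqrt |(2 : ℝ) ^ M *
                ∫ t in Iset M, (2 : ℝ) ^ α * |Kker (2 ^ α) (x + t)| ∂μ| ∂μ ≤ C := by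
  refine ⟨4, by norm_num, ?_⟩
  intro μ hμ M α hαM
  -- the measure is finite
  haveI : IsFiniteMeasure μ := by
    constructor
    have huniv : (Set.univ : Set G) = cyl 0 0 := by
      ext x; simp [cyl]
    rw [huniv, hμ]
    simp
  set g : G → ℝ := fun x => Real.sqrt ((2:ℝ) ^ α * |Kker (2 ^ α) x|) with hg
  -- Step 1: identify the integrand with g
  have key : ∀ x : G,
      Real.sqrt |(2 : ℝ) ^ M *
        ∫ t in Iset M, (2 : ℝ) ^ α * |Kker (2 ^ α) (x + t)| ∂μ| = g x := by
    intro x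
    simp only [Iset]
    have hconst : Set.EqOn (fun t => (2:ℝ) ^ α * |Kker (2 ^ α) (x + t)|)
        (fun _ => (2:ℝ) ^ α * |Kker (2 ^ α) x|) (Iset M) := by
      intro t ht
      have hloc : ∀ j < α, (x + t) j = x j := by
        intro j hj
        have htj : t j = 0 := ht j (by omega)
        show x j + t j = x j
        rw [htj, add_zero]
      simp only
      rw [Kker_local hloc]
    rw [setIntegral_congr_fun (measurable_cyl M 0) hconst, setIntegral_const, measureReal_def, hμ M 0]
    have htr : ((2 : ENNReal)⁻¹ ^ M).toReal = (2:ℝ)⁻¹ ^ M := by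
      simp
    rw [htr, smul_eq_mul]
    have harith : (2:ℝ) ^ M * ((2:ℝ)⁻¹ ^ M * ((2:ℝ) ^ α * |Kker (2 ^ α) x|))
        = (2:ℝ) ^ α * |Kker (2 ^ α) x| := by
      rw [← mul_assoc, ← mul_pow]
      norm_num
    rw [harith, abs_of_nonneg (by positivity)]
  simp only [key]
  set A : ℕ → Set G := fun s => cyl α (if s = α then 0 else e s) with hA
  have hAmeas : ∀ s, MeasurableSet (A s) := fun s => measurable_cyl α _
  have hAμ : ∀ s, μ (A s) = (2 : ENNReal)⁻¹ ^ α := fun s => hμ α _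
  set h : G → ℝ := fun x =>
    ∑ s ∈ Finset.range (α + 1),
      (A s).indicator (fun _ => Real.sqrt ((2:ℝ) ^ (α + s))) x with hh
  have hpt : ∀ x : G, g x ≤ h x := by
    intro x
    have hnn : ∀ s ∈ Finset.range (α + 1),
        0 ≤ (A s).indicator (fun _ => Real.sqrt ((2:ℝ) ^ (α + s))) x :=
      fun s _ => Set.indicator_nonneg (fun _ _ => Real.sqrt_nonneg _) x
    have hgS : g x = Real.sqrt |Ssum α x| := by
      rw [hg]
      simp only
      rw [Ssum_eq_Kker]
    by_cases hzero : ∀ j < α, x j = 0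
    · have hxA : x ∈ A α := by
        intro j hj
        simp only [if_pos rfl]
        exact hzero j hj
      have hgle : g x ≤ Real.sqrt ((2:ℝ) ^ (α + α)) := by
        rw [hgS]
        apply Real.sqrt_le_sqrt
        calc |Ssum α x| ≤ 4 ^ α := abs_Ssum_le α x
          _ = (2:ℝ) ^ (α + α) := by
              rw [pow_add, ← mul_pow]; norm_num
      refine le_trans hgle ?_
      have := Finset.single_le_sum hnn (Finset.mem_range.2 (by omega : α < α + 1))
      rwa [Set.indicator_of_mem hxA] at this
    · push_neg at hzero
      obtain ⟨j0, hj0, hxj0⟩ := hzero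
      classical
      set S := (Finset.range α).filter (fun j => x j ≠ 0) with hSdef
      have hS : S.Nonempty :=
        ⟨j0, Finset.mem_filter.2 ⟨Finset.mem_range.2 hj0, hxj0⟩⟩
      set m := S.max' hS with hmdef
      have hmS : m ∈ S := S.max'_mem hS
      have hmα : m < α := Finset.mem_range.1 (Finset.mem_filter.1 hmS).1
      have hxm : x m ≠ 0 := (Finset.mem_filter.1 hmS).2
      have hmax : ∀ j, m < j → j < α → x j = 0 := by
        intro j h1 h2
        by_contra hne
        have hjS : j ∈ S := Finset.mem_filter.2 ⟨Finset.mem_range.2 h2, hne⟩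
        have := Finset.le_max' S j hjS
        omega
      have hSsum := Ssum_of_max hmα hxm hmax
      by_cases hlow : ∀ j < m, x j = 0
      · have hxA : x ∈ A m := by
          intro j hj
          simp only [if_neg (by omega : m ≠ α)]
          rcases lt_trichotomy j m with hc | hc | hc
          · rw [hlow j hc]
            simp only [e, if_neg (by omega : ¬ j = m)]
          · subst hc
            rw [zmod2_eq_one hxm]
            simp [e]
          · rw [hmax j hc hj]
            simp only [e, if_neg (by omega : ¬ j = m)]
        have hD : Dker (2 ^ m) x = 2 ^ m := by
          rw [Dker_two_pow, if_pos hlow]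
        have hgle : g x ≤ Real.sqrt ((2:ℝ) ^ (α + m)) := by
          rw [hgS, hSsum, hD]
          apply Real.sqrt_le_sqrt
          rw [abs_of_nonneg (by positivity)]
          calc (2:ℝ) ^ (α - 1 - m) * ((2:ℝ) ^ m * (2:ℝ) ^ m)
              = (2:ℝ) ^ ((α - 1 - m) + m + m) := by rw [pow_add, pow_add, mul_assoc]
            _ ≤ (2:ℝ) ^ (α + m) := by
                apply pow_le_pow_right₀ (by norm_num)
                omega
        refine le_trans hgle ?_
        have := Finset.single_le_sum hnn (Finset.mem_range.2 (by omega : m < α + 1))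
        rwa [Set.indicator_of_mem hxA] at this
      · push_neg at hlow
        obtain ⟨j1, hj1, hxj1⟩ := hlow
        have hD : Dker (2 ^ m) x = 0 := by
          rw [Dker_two_pow, if_neg (by push_neg; exact ⟨j1, hj1, hxj1⟩)]
        have hg0 : g x = 0 := by
          rw [hgS, hSsum, hD]
          simp
        rw [hg0]
        exact Finset.sum_nonneg hnn
  have hmeas_g : Measurable g := by
    apply Real.continuous_sqrt.measurable.comp
    exact measurable_const.mul (measurable_Kker _).abs
  have hint_term : ∀ s ∈ Finset.range (α + 1),
      Integrable ((A s).indicator (fun _ : G => Real.sqrt ((2:ℝ) ^ (α + s)))) μ :=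
    fun s _ => (integrable_const _).indicator (hAmeas s)
  have hint_h : Integrable h μ := integrable_finset_sum _ hint_term
  have hint_g : Integrable g μ := by
    apply hint_h.mono' hmeas_g.aestronglyMeasurable
    apply Filter.Eventually.of_forall
    intro x
    rw [Real.norm_eq_abs, abs_of_nonneg (Real.sqrt_nonneg _)]
    exact hpt x
  calc ∫ x in (Iset M)ᶜ, g x ∂μ
      ≤ ∫ x, g x ∂μ := setIntegral_le_integral hint_g
        (Filter.Eventually.of_forall fun x => Real.sqrt_nonneg _)
    _ ≤ ∫ x, h x ∂μ := integral_mono hint_g hint_h hpt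
    _ = ∑ s ∈ Finset.range (α + 1),
          ((μ (A s)).toReal * Real.sqrt ((2:ℝ) ^ (α + s))) := by
        rw [hh]
        rw [integral_finset_sum _ hint_term]
        refine Finset.sum_congr rfl fun s hs => ?_
        rw [integral_indicator_const _ (hAmeas s), smul_eq_mul, measureReal_def]
    _ = ∑ s ∈ Finset.range (α + 1),
          ((2:ℝ)⁻¹ ^ α * Real.sqrt ((2:ℝ) ^ (α + s))) := by
        refine Finset.sum_congr rfl fun s hs => ?_
        rw [hAμ s]
        simp
    _ ≤ 4 := numeric_bound α
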